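/- In any ordered goods instance, let B ⊆ M be a bundle with v_i(B) ≥ μ_i for some agent i. If every other agent i' ≠ i has an MMS partition containing a bundle B_{i'} with B_{i'} ⪰ B, then removing agent i together with the items of B (allocating B to i) is a valid reduction. -/

import Mathlib

open Finset

/-- `A` is an (ordered) partition of the item set `M` into bundles indexed by
the agent set `N`: bundles are pairwise disjoint subsets of `M` whose union is `M`. -/
def IsPartition (N M : Finset ℕ) (A : ℕ → Finset ℕ) : Prop :=
  (∀ i ∈ N, A i ⊆ M) ∧
  (∀ i ∈ N, ∀ j ∈ N, i ≠ j → Disjoint (A i) (A j)) ∧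
  N.biUnion A = M

/-- Additive value of a bundle `B` under item values `v`. -/
noncomputable def bval (v : ℕ → ℝ) (B : Finset ℕ) : ℝ := ∑ g ∈ B, v g

/-- The maximin share of an agent with item values `v`, over the instance with
agent set `N` and item set `M`: the largest, over all partitions, of the minimum
bundle value. -/
noncomputable def mms (N M : Finset ℕ) (v : ℕ → ℝ) : ℝ :=
  sSup { x | ∃ A : ℕ → Finset ℕ, IsPartition N M A ∧
    x = sInf ((fun i => bval v (A i)) '' (N : Set ℕ)) }

/-- `A` is an MMS partition for an agent with item values `v`: every bundle is
worth at least the agent's maximin share. -/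
def IsMMSPartition (N M : Finset ℕ) (v : ℕ → ℝ) (A : ℕ → Finset ℕ) : Prop :=
  IsPartition N M A ∧ ∀ j ∈ N, mms N M v ≤ bval v (A j)

/-- The instance `(N, M, v)` admits an MMS allocation: an allocation giving
every agent a bundle worth at least her maximin share. -/
def ExistsMMSAllocation (N M : Finset ℕ) (v : ℕ → ℕ → ℝ) : Prop :=
  ∃ A : ℕ → Finset ℕ, IsPartition N M A ∧
    ∀ i ∈ N, mms N M (v i) ≤ bval (v i) (A i)

/-- A goods instance: all item values are non-negative. -/
def GoodsInstance (N M : Finset ℕ) (v : ℕ → ℕ → ℝ) : Prop :=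
  ∀ i ∈ N, ∀ j ∈ M, 0 ≤ v i j

/-- A chores instance: all item values are non-positive. -/
def ChoresInstance (N M : Finset ℕ) (v : ℕ → ℕ → ℝ) : Prop :=
  ∀ i ∈ N, ∀ j ∈ M, v i j ≤ 0

/-- Ordered goods instance: lower-numbered items are (weakly) more valuable. -/
def OrderedGoods (N M : Finset ℕ) (v : ℕ → ℕ → ℝ) : Prop :=
  ∀ i ∈ N, ∀ j ∈ M, ∀ k ∈ M, j ≤ k → v i k ≤ v i j

/-- Ordered chores instance: lower-numbered items are (weakly) worse. -/
def OrderedChores (N M : Finset ℕ) (v : ℕ → ℕ → ℝ) : Prop :=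
  ∀ i ∈ N, ∀ j ∈ M, ∀ k ∈ M, j ≤ k → v i j ≤ v i k

/-- Removing agents `N'` and items `M'` is a valid reduction: `M'` can be
partitioned among the agents of `N'` so that each receives a bundle worth at
least her MMS in the original instance, and in the reduced instance every
remaining agent's MMS is at least her MMS in the original instance. -/
def ValidReduction (N M : Finset ℕ) (v : ℕ → ℕ → ℝ) (N' M' : Finset ℕ) : Prop :=
  N' ⊆ N ∧ M' ⊆ M ∧
  (∃ B : ℕ → Finset ℕ, IsPartition N' M' B ∧
    ∀ i ∈ N', mms N M (v i) ≤ bval (v i) (B i)) ∧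
  ∀ i ∈ N \ N', mms N M (v i) ≤ mms (N \ N') (M \ M') (v i)

/-- In an ordered instance, bundle `B` dominates bundle `B'`: there is an
injective map `f : B' → B` with `f j ≤ j` for all `j ∈ B'`. -/
def Dominates (B B' : Finset ℕ) : Prop :=
  ∃ f : ℕ → ℕ, Set.InjOn f (B' : Set ℕ) ∧ ∀ j ∈ B', f j ∈ B ∧ f j ≤ j

/-! Let `i' ≠ i` be another agent, `A` her MMS partition and `A j ⪰ B`. Comparing, for every
threshold `t`, the numbers of items `≤ t` in the two bundles and applying Hall's theorem gives
`A j \ B ⪰ B \ A j`. Swapping each item of `B \ A j` with its partner in `A j \ B` moves all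
of `B` into bundle `j` and, as the partner is at least as valuable, lowers no other bundle.
Then `B` is removed and bundle `i` is merged into another one so that the rest of bundle `j`
is absorbed; each of the `n - 1` remaining bundles contains a bundle of the exchanged
partition other than `j`, so it is still worth at least `μ_{i'}`. -/

theorem Dominates.card_filter_le {A B : Finset ℕ} (h : Dominates A B) (t : ℕ) :
    #(B.filter (· ≤ t)) ≤ #(A.filter (· ≤ t)) := by
  obtain ⟨f, hinj, hf⟩ := h
  refine card_le_card_of_injOn f (fun g hg => ?_) (hinj.mono fun g hg => ?_)
  · simp only [coe_filter, Set.mem_ofPred_eq] at hg ⊢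
    exact ⟨(hf g hg.1).1, (hf g hg.1).2.trans hg.2⟩
  · exact (mem_filter.mp hg).1

theorem dominates_of_card_filter_le {A B : Finset ℕ}
    (h : ∀ t, #(B.filter (· ≤ t)) ≤ #(A.filter (· ≤ t))) : Dominates A B := by
  let candidates : B → Finset ℕ := fun g => A.filter (· ≤ g)
  have hall : ∀ s : Finset B, #s ≤ #(s.biUnion candidates) := by
    intro s
    rcases s.eq_empty_or_nonempty with rfl | hs
    · simp
    -- Hall's condition for `s` is the counting hypothesis at the largest element of `s`.
    obtain ⟨g, hgs, hg⟩ := s.exists_max_image Subtype.val hs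
    calc #s = #(s.image Subtype.val) := (card_image_of_injective s Subtype.val_injective).symm
      _ ≤ #(B.filter (· ≤ g.1)) := card_le_card fun x hx => by
          obtain ⟨y, hy, rfl⟩ := mem_image.mp hx
          exact mem_filter.mpr ⟨y.2, hg y hy⟩
      _ ≤ #(A.filter (· ≤ g.1)) := h g
      _ ≤ #(s.biUnion candidates) := card_le_card fun x hx => mem_biUnion.mpr ⟨g, hgs, hx⟩
  obtain ⟨f, hinj, hf⟩ := (all_card_le_biUnion_card_iff_exists_injective candidates).mp hall
  refine ⟨fun g => if hg : g ∈ B then f ⟨g, hg⟩ else g, fun a ha b hb hab => ?_,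
    fun g hg => ?_⟩
  · simp only [dif_pos (mem_coe.mp ha), dif_pos (mem_coe.mp hb)] at hab
    exact congrArg Subtype.val (hinj hab)
  · simpa [dif_pos hg, candidates] using hf ⟨g, hg⟩

theorem card_filter_sdiff_add_card_filter_inter (A B : Finset ℕ) (p : ℕ → Prop)
    [DecidablePred p] : #((B \ A).filter p) + #((B ∩ A).filter p) = #(B.filter p) := by
  rw [← card_union_of_disjoint (disjoint_filter_filter (disjoint_sdiff_inter B A)),
    ← filter_union, sdiff_union_inter]

theorem Dominates.sdiff {A B : Finset ℕ} (h : Dominates A B) : Dominates (A \ B) (B \ A) := by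
  refine dominates_of_card_filter_le fun t => ?_
  have hB := card_filter_sdiff_add_card_filter_inter A B (· ≤ t)
  have hA := card_filter_sdiff_add_card_filter_inter B A (· ≤ t)
  rw [inter_comm] at hA
  have := h.card_filter_le t
  omega

theorem Set.InjOn.exists_involutive_extend {α : Type*} {D : Set α} {G : α → α}
    (hG : Set.InjOn G D) (hdisj : Disjoint D (G '' D)) :
    ∃ σ : α → α, Function.Involutive σ ∧ Set.EqOn σ G D ∧
      ∀ x, x ∉ D → x ∉ G '' D → σ x = x := by
  classical
  rcases isEmpty_or_nonempty α with hα | hα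
  · exact ⟨id, fun _ => rfl, fun x => isEmptyElim x, fun _ _ _ => rfl⟩
  let σ : α → α := fun x =>
    if x ∈ D then G x else if x ∈ G '' D then Function.invFunOn G D x else x
  have hσD : ∀ x ∈ D, σ x = G x := fun x hx => if_pos hx
  have hσGD : ∀ x ∈ D, σ (G x) = x := fun x hx => by
    have hGx : G x ∉ D := fun h => hdisj.ne_of_mem h ⟨x, hx, rfl⟩ rfl
    simp only [σ, if_neg hGx, if_pos (Set.mem_image_of_mem G hx)]
    exact hG.leftInvOn_invFunOn hx
  have hσ_id : ∀ x, x ∉ D → x ∉ G '' D → σ x = x := fun x h₁ h₂ => by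
    simp only [σ, if_neg h₁, if_neg h₂]
  refine ⟨σ, fun x => ?_, hσD, hσ_id⟩
  by_cases hx : x ∈ D
  · rw [hσD x hx, hσGD x hx]
  by_cases hx' : x ∈ G '' D
  · obtain ⟨y, hy, rfl⟩ := hx'
    rw [hσGD y hy, hσD y hy]
  · rw [hσ_id x hx hx', hσ_id x hx hx']

theorem IsPartition.image {N M : Finset ℕ} {A : ℕ → Finset ℕ} (hA : IsPartition N M A)
    {σ : ℕ → ℕ} (hσ : Function.Injective σ) :
    IsPartition N (M.image σ) (fun k => (A k).image σ) := by
  obtain ⟨hsub, hdisj, hunion⟩ := hA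
  refine ⟨fun k hk => image_subset_image (hsub k hk),
    fun k hk l hl hkl => (disjoint_image hσ).mpr (hdisj k hk l hl hkl), ?_⟩
  rw [← hunion, biUnion_image]

theorem IsPartition.sdiff {N M : Finset ℕ} {A : ℕ → Finset ℕ} (hA : IsPartition N M A)
    (B : Finset ℕ) : IsPartition N (M \ B) (fun k => A k \ B) := by
  obtain ⟨hsub, hdisj, hunion⟩ := hA
  refine ⟨fun k hk => sdiff_subset_sdiff (hsub k hk) le_rfl,
    fun k hk l hl hkl => (hdisj k hk l hl hkl).mono sdiff_subset sdiff_subset, ?_⟩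
  ext x
  simp only [← hunion, mem_biUnion, mem_sdiff]
  tauto

theorem IsPartition.merge {N M : Finset ℕ} {A : ℕ → Finset ℕ} (hA : IsPartition N M A)
    {i t : ℕ} (hi : i ∈ N) (ht : t ∈ N \ {i}) :
    IsPartition (N \ {i}) M (Function.update A t (A t ∪ A i)) := by
  obtain ⟨hsub, hdisj, hunion⟩ := hA
  obtain ⟨htN, hti⟩ := mem_sdiff.mp ht
  have hti : t ≠ i := fun h => hti (mem_singleton.mpr h)
  refine ⟨fun k hk => ?_, fun k hk l hl hkl => ?_, ?_⟩
  · rcases eq_or_ne k t with rfl | hkt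
    · simpa using union_subset (hsub k htN) (hsub i hi)
    · simpa [hkt] using hsub k (mem_sdiff.mp hk).1
  · obtain ⟨hkN, hki⟩ := mem_sdiff.mp hk
    obtain ⟨hlN, hli⟩ := mem_sdiff.mp hl
    rw [mem_singleton] at hki hli
    rcases eq_or_ne k t with rfl | hkt
    · simpa [Ne.symm hkl] using
        disjoint_union_left.mpr ⟨hdisj k hkN l hlN hkl, hdisj i hi l hlN (Ne.symm hli)⟩
    rcases eq_or_ne l t with rfl | hlt
    · simpa [hkl] using disjoint_union_right.mpr ⟨hdisj k hkN l hlN hkl, hdisj k hkN i hi hki⟩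
    · simpa [hkt, hlt] using hdisj k hkN l hlN hkl
  · rw [← hunion]
    ext x
    simp only [mem_biUnion, mem_sdiff, mem_singleton, Function.update_apply]
    constructor
    · rintro ⟨k, ⟨hkN, -⟩, hx⟩
      split_ifs at hx with hkt
      · rcases mem_union.mp hx with hx | hx
        exacts [⟨t, htN, hx⟩, ⟨i, hi, hx⟩]
      · exact ⟨k, hkN, hx⟩
    · rintro ⟨k, hkN, hx⟩
      by_cases hk : k = i ∨ k = t
      · refine ⟨t, ⟨htN, hti⟩, ?_⟩
        rcases hk with rfl | rfl <;> simp [hx]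
      · push Not at hk
        exact ⟨k, ⟨hkN, hk.1⟩, by simpa [hk.2] using hx⟩

theorem isPartition_singleton (i : ℕ) (M : Finset ℕ) : IsPartition {i} M fun _ => M :=
  ⟨fun _ _ => subset_rfl,
    fun _ ha _ hb hab => absurd ((mem_singleton.mp ha).trans (mem_singleton.mp hb).symm) hab,
    singleton_biUnion⟩

theorem IsPartition.exists_exchange {N M : Finset ℕ} {A : ℕ → Finset ℕ}
    (hA : IsPartition N M A) {j : ℕ} (hj : j ∈ N) {B : Finset ℕ} (hB : B ⊆ M)
    {v : ℕ → ℝ} {G : ℕ → ℕ} (hGinj : Set.InjOn G ↑(B \ A j))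
    (hG : ∀ g ∈ B \ A j, G g ∈ A j \ B ∧ v g ≤ v (G g)) :
    ∃ A' : ℕ → Finset ℕ, IsPartition N M A' ∧ B ⊆ A' j ∧
      ∀ k ∈ N, k ≠ j → bval v (A k) ≤ bval v (A' k) := by
  have hGD : G '' ↑(B \ A j) ⊆ ↑(A j \ B) := fun _ ⟨g, hg, hgx⟩ => hgx ▸ (hG g hg).1
  have hdisj : Disjoint (↑(B \ A j) : Set ℕ) (G '' ↑(B \ A j)) :=
    (disjoint_coe.mpr disjoint_sdiff_self_left).mono_right
      (hGD.trans (coe_subset.mpr sdiff_subset))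
  obtain ⟨σ, hσ, hσG, hσ_id⟩ := hGinj.exists_involutive_extend hdisj
  have hσ_of_notMem : ∀ x, x ∉ A j → σ x = x ∨ (x ∈ B \ A j ∧ σ x = G x) := by
    intro x hx
    by_cases hxD : x ∈ B \ A j
    · exact Or.inr ⟨hxD, hσG hxD⟩
    · exact Or.inl (hσ_id x hxD fun h => hx (mem_sdiff.mp (hGD h)).1)
  have hσM : ∀ x ∈ M, σ x ∈ M := by
    intro x hx
    by_cases hxD : x ∈ B \ A j
    · rw [hσG hxD]; exact hA.1 j hj (mem_sdiff.mp (hG x hxD).1).1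
    by_cases hxGD : x ∈ G '' ↑(B \ A j)
    · obtain ⟨g, hg, rfl⟩ := hxGD
      rw [← hσG hg, hσ]; exact hB (mem_sdiff.mp hg).1
    · rwa [hσ_id x hxD hxGD]
  have himage : M.image σ = M :=
    Subset.antisymm (image_subset_iff.mpr hσM)
      fun x hx => mem_image.mpr ⟨σ x, hσM x hx, hσ x⟩
  refine ⟨fun k => (A k).image σ, himage ▸ hA.image hσ.injective, fun g hg => ?_,
    fun k hk hkj => ?_⟩
  · refine mem_image.mpr ⟨σ g, ?_, hσ g⟩
    by_cases hgA : g ∈ A j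
    · rwa [hσ_id g (fun h => (mem_sdiff.mp h).2 hgA) fun h => (mem_sdiff.mp (hGD h)).2 hg]
    · have hgD : g ∈ B \ A j := mem_sdiff.mpr ⟨hg, hgA⟩
      rw [hσG hgD]
      exact (mem_sdiff.mp (hG g hgD).1).1
  · rw [bval, bval, sum_image (hσ.injective.injOn)]
    refine sum_le_sum fun x hx => ?_
    rcases hσ_of_notMem x (disjoint_left.mp (hA.2.1 k hk j hj hkj) hx) with h | ⟨hxD, h⟩
    · rw [h]
    · rw [h]; exact (hG x hxD).2

theorem IsPartition.exists_remove_agent {N M : Finset ℕ} {A : ℕ → Finset ℕ}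
    (hA : IsPartition N M A) {i j : ℕ} (hi : i ∈ N) (hj : j ∈ N) (hN : (N \ {i}).Nonempty)
    {B : Finset ℕ} (hBA : B ⊆ A j) :
    ∃ C : ℕ → Finset ℕ, IsPartition (N \ {i}) (M \ B) C ∧
      ∀ k ∈ N \ {i}, ∃ k' ∈ N, k' ≠ j ∧ A k' ⊆ C k := by
  -- Bundle `i` is merged into a bundle `t`, chosen so that the merged pair contains `j`
  -- whenever `j ≠ i`; every other bundle then misses `B`.
  obtain ⟨t, ht, htij⟩ : ∃ t ∈ N \ {i}, t = j ∨ i = j := by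
    by_cases hij : i = j
    · obtain ⟨t, ht⟩ := hN
      exact ⟨t, ht, Or.inr hij⟩
    · exact ⟨j, mem_sdiff.mpr ⟨hj, fun h => hij (mem_singleton.mp h).symm⟩, Or.inl rfl⟩
  have hsdiff_eq : ∀ k ∈ N, k ≠ j → A k \ B = A k := fun k hk hkj =>
    sdiff_eq_self_of_disjoint ((hA.2.1 k hk j hj hkj).mono_right hBA)
  refine ⟨fun k => Function.update A t (A t ∪ A i) k \ B, (hA.merge hi ht).sdiff B,
    fun k hk => ?_⟩
  obtain ⟨hkN, hki⟩ := mem_sdiff.mp hk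
  have hki : k ≠ i := fun h => hki (mem_singleton.mpr h)
  rcases eq_or_ne k t with rfl | hkt
  · simp only [Function.update_self]
    rcases htij with rfl | rfl
    · exact ⟨i, hi, Ne.symm hki, (hsdiff_eq i hi (Ne.symm hki)).symm.subset.trans
        (sdiff_subset_sdiff subset_union_right le_rfl)⟩
    · exact ⟨k, hkN, hki, (hsdiff_eq k hkN hki).symm.subset.trans
        (sdiff_subset_sdiff subset_union_left le_rfl)⟩
  · have hkj : k ≠ j := by rcases htij with rfl | rfl <;> assumption
    refine ⟨k, hkN, hkj, ?_⟩
    simp only [Function.update_of_ne hkt, hsdiff_eq k hkN hkj, subset_refl]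

theorem le_mms_of_isPartition {N M : Finset ℕ} {v : ℕ → ℝ} {C : ℕ → Finset ℕ}
    (hC : IsPartition N M C) (hN : N.Nonempty) {x : ℝ} (hx : ∀ k ∈ N, x ≤ bval v (C k)) :
    x ≤ mms N M v := by
  obtain ⟨k₀, hk₀⟩ := hN
  have hbdd : BddAbove {x | ∃ A : ℕ → Finset ℕ, IsPartition N M A ∧
      x = sInf ((fun k => bval v (A k)) '' (N : Set ℕ))} := by
    refine ⟨∑ g ∈ M, |v g|, ?_⟩
    rintro _ ⟨A, hA, rfl⟩
    calc sInf ((fun k => bval v (A k)) '' (N : Set ℕ))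
        ≤ bval v (A k₀) := csInf_le ((N.finite_toSet.image _).bddBelow) ⟨k₀, hk₀, rfl⟩
      _ ≤ ∑ g ∈ A k₀, |v g| := sum_le_sum fun g _ => le_abs_self (v g)
      _ ≤ ∑ g ∈ M, |v g| :=
        sum_le_sum_of_subset_of_nonneg (hA.1 k₀ hk₀) fun g _ _ => abs_nonneg (v g)
  refine le_csSup_of_le hbdd ⟨C, hC, rfl⟩ (le_csInf ⟨_, k₀, hk₀, rfl⟩ ?_)
  rintro _ ⟨k, hk, rfl⟩
  exact hx k hk

theorem mms_le_mms_sdiff_of_dominates {N M : Finset ℕ} {v : ℕ → ℝ}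
    (hpos : ∀ g ∈ M, 0 ≤ v g) (hord : ∀ g ∈ M, ∀ h ∈ M, g ≤ h → v h ≤ v g)
    {B : Finset ℕ} (hB : B ⊆ M) {i : ℕ} (hi : i ∈ N) (hN : (N \ {i}).Nonempty)
    {A : ℕ → Finset ℕ} (hA : IsMMSPartition N M v A) {j : ℕ} (hj : j ∈ N)
    (hdom : Dominates (A j) B) :
    mms N M v ≤ mms (N \ {i}) (M \ B) v := by
  obtain ⟨G, hGinj, hG⟩ := hdom.sdiff
  obtain ⟨A', hA', hBA', hA'_ge⟩ := hA.1.exists_exchange hj hB hGinj fun g hg =>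
    ⟨(hG g hg).1, hord _ (hA.1.1 j hj (mem_sdiff.mp (hG g hg).1).1) _
      (hB (mem_sdiff.mp hg).1) (hG g hg).2⟩
  obtain ⟨C, hC, hC_sup⟩ := hA'.exists_remove_agent hi hj hN hBA'
  refine le_mms_of_isPartition hC hN fun k hk => ?_
  obtain ⟨k', hk', hk'j, hsub⟩ := hC_sup k hk
  calc mms N M v ≤ bval v (A k') := hA.2 k' hk'
    _ ≤ bval v (A' k') := hA'_ge k' hk' hk'j
    _ ≤ bval v (C k) := sum_le_sum_of_subset_of_nonneg hsub fun g hg _ =>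
      hpos g (mem_sdiff.mp (hC.1 k hk hg)).1

theorem domination_reduction (n m : ℕ) (v : ℕ → ℕ → ℝ)
    (hgoods : GoodsInstance (Finset.Icc 1 n) (Finset.Icc 1 m) v)
    (hord : OrderedGoods (Finset.Icc 1 n) (Finset.Icc 1 m) v)
    (B : Finset ℕ) (hB : B ⊆ Finset.Icc 1 m)
    (i : ℕ) (hi : i ∈ Finset.Icc 1 n)
    (hval : mms (Finset.Icc 1 n) (Finset.Icc 1 m) (v i) ≤ bval (v i) B)
    (hdom : ∀ i' ∈ Finset.Icc 1 n, i' ≠ i →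
      ∃ A : ℕ → Finset ℕ,
        IsMMSPartition (Finset.Icc 1 n) (Finset.Icc 1 m) (v i') A ∧
        ∃ j ∈ Finset.Icc 1 n, Dominates (A j) B) :
    ValidReduction (Finset.Icc 1 n) (Finset.Icc 1 m) v {i} B := by
  refine ⟨singleton_subset_iff.mpr hi, hB,
    ⟨fun _ => B, isPartition_singleton i B, fun k hk => mem_singleton.mp hk ▸ hval⟩,
    fun i' hi' => ?_⟩
  obtain ⟨hi'N, hi'i⟩ := mem_sdiff.mp hi'
  obtain ⟨A, hA, j, hj, hAB⟩ := hdom i' hi'N fun h => hi'i (mem_singleton.mpr h)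
  exact mms_le_mms_sdiff_of_dominates (hgoods i' hi'N) (hord i' hi'N) hB hi ⟨i', hi'⟩ hA hj hAB
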